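/- Causal equals bicausal in two steps under stochastic ordering: Let N = 2 and c(x₁,x₂,y₁,y₂) = c₁(x₁,y₁) + |x₂ − y₂| with c₁ lower semicontinuous and bounded from below. Suppose that for every z ∈ ℝ and every y₁, one of the following holds: F_{μ^{x₁}}(z) ≥ F_{ν^{y₁}}(z) for all x₁, or F_{μ^{x₁}}(z) ≤ F_{ν^{y₁}}(z) for all x₁. Then inf_{γ ∈ Π_c(μ,ν)} ∫ c dγ = inf_{γ ∈ Π_bc(μ,ν)} ∫ c dγ. -/

import Mathlib

/-!
Write `Θ(x₁, y₁)` for the conditional law of `(x₂, y₂)` given the first coordinates under a plan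
`γ`. Causality forces the first marginal of `Θ` to be `μ^{x₁}`, while averaging its second
marginal over `x₁` given `y₁` always returns `ν^{y₁}`. Since
`∫ |x₂ - y₂| dΘ ≥ ∫ |F_{Θ₁}(z) - F_{Θ₂}(z)| dz`, and since by the ordering hypothesis
`F_{μ^{x₁}}(z) - F_{ν^{y₁}}(z)` has a sign independent of `x₁`, Jensen's inequality in `x₁`
bounds the second-step cost of `γ` from below by `∫∫ |F_{μ^{x₁}}(z) - F_{ν^{y₁}}(z)| dz dγ`.
Keeping the first-step coupling of `γ` and coupling `μ^{x₁}`, `ν^{y₁}` through their quantile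
functions at one common uniform gives a bicausal plan with the same first-step cost that attains
this bound.
-/

open MeasureTheory ProbabilityTheory Set Filter
open scoped ENNReal NNReal BoundedContinuousFunction

noncomputable section

namespace CausalTransport

/-- The path space of a real-valued process in `N` time steps. -/
abbrev Path (N : ℕ) := Fin N → ℝ

/-- Truncation of a path to its first `t` coordinates. -/
def proj (N t : ℕ) (x : Path N) : Fin t → ℝ :=
  fun i => if h : (i : ℕ) < N then x ⟨i, h⟩ else 0

/-- The coordinate with (0-based) index `t`, with junk value `0` if `t ≥ N`. -/
def coord (N t : ℕ) (x : Path N) : ℝ := if h : t < N then x ⟨t, h⟩ else 0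

/-- The coordinates of a path after time `t`. -/
def tailProj (N t : ℕ) (x : Path N) : Fin (N - t) → ℝ := fun i => coord N (t + i) x

/-- Extension of a history of length `t` by one further value. -/
def snocFun (t : ℕ) (xs : Fin t → ℝ) (r : ℝ) : Fin (t + 1) → ℝ :=
  fun i => if h : (i : ℕ) < t then xs ⟨i, h⟩ else r

/-- Extension of a history of length `t` to a full path (by `0`). -/
def pad (N t : ℕ) (xs : Fin t → ℝ) : Path N :=
  fun i => if h : (i : ℕ) < t then xs ⟨i, h⟩ else 0

/-- Glue the first `t` coordinates of `x` with the later coordinates `z`. -/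
def glue (N t : ℕ) (x : Path N) (z : Fin (N - t) → ℝ) : Path N :=
  fun i => if (i : ℕ) < t then x i else
    if h : (i : ℕ) - t < N - t then z ⟨(i : ℕ) - t, h⟩ else 0

/-- Truncation of a pair of paths to the first `t` coordinates of each. -/
def pairProj (N t : ℕ) (p : Path N × Path N) : (Fin t → ℝ) × (Fin t → ℝ) :=
  (proj N t p.1, proj N t p.2)

/-- The σ-algebra on path space generated by the first `t` coordinates. -/
def filt (N t : ℕ) : MeasurableSpace (Path N) :=
  MeasurableSpace.comap (proj N t) inferInstance

/-- `γ` is a transport plan (coupling) between `μ` and `ν`. -/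
def IsCoupling {α β : Type*} [MeasurableSpace α] [MeasurableSpace β]
    (μ : Measure α) (ν : Measure β) (γ : Measure (α × β)) : Prop :=
  γ.map Prod.fst = μ ∧ γ.map Prod.snd = ν

/-- `γ` is a causal transport plan between `μ` and `ν`: it is a coupling and, for any
disintegration `K` of `γ` over its first coordinate and any `t ∈ {1,…,N}`, the map
`x ↦ K x B` is measurable for the σ-algebra of the first `t` coordinates (up to `μ`-null
sets) whenever `B` is measurable for the first `t` coordinates. -/
def IsCausal (N : ℕ) (μ ν : Measure (Path N)) (γ : Measure (Path N × Path N)) : Prop :=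
  IsCoupling μ ν γ ∧
  ∀ K : Kernel (Path N) (Path N), IsSFiniteKernel K → μ ⊗ₘ K = γ →
    ∀ t : ℕ, 1 ≤ t → t ≤ N → ∀ B : Set (Path N), MeasurableSet[filt N t] B →
      ∃ g : Path N → ℝ≥0∞, Measurable[filt N t] g ∧ (fun x => K x B) =ᵐ[μ] g

/-- `γ` is a bicausal transport plan between `μ` and `ν`. -/
def IsBicausal (N : ℕ) (μ ν : Measure (Path N)) (γ : Measure (Path N × Path N)) : Prop :=
  IsCausal N μ ν γ ∧ IsCausal N ν μ (γ.map Prod.swap)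

/-- Regular conditional distribution, under `μ`, of the coordinate of index `t`
given the first `t` coordinates. -/
def nextK (N : ℕ) (μ : Measure (Path N)) [IsFiniteMeasure μ] (t : ℕ) :
    Kernel (Fin t → ℝ) ℝ :=
  (μ.map (fun x => (proj N t x, coord N t x))).condKernel

/-- Regular conditional distribution, under `μ`, of all the coordinates after time `t`
given the first `t` coordinates. -/
def tailK (N : ℕ) (μ : Measure (Path N)) [IsFiniteMeasure μ] (t : ℕ) :
    Kernel (Fin t → ℝ) (Fin (N - t) → ℝ) :=
  (μ.map (fun x => (proj N t x, tailProj N t x))).condKernel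

/-- Regular conditional distribution, under `γ`, of the pair of coordinates of index `t`
given the first `t` coordinates of both paths. -/
def stepK (N : ℕ) (γ : Measure (Path N × Path N)) [IsFiniteMeasure γ] (t : ℕ) :
    Kernel ((Fin t → ℝ) × (Fin t → ℝ)) (ℝ × ℝ) :=
  (γ.map (fun p => (pairProj N t p, (coord N t p.1, coord N t p.2)))).condKernel

/-- Regular conditional distribution, under `μ`, of the coordinate of index `t` given the
single coordinate of index `t-1` (one-step Markov transition kernel). -/
def mstep (N : ℕ) (μ : Measure (Path N)) [IsFiniteMeasure μ] (t : ℕ) : Kernel ℝ ℝ :=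
  (μ.map (fun x => (coord N (t - 1) x, coord N t x))).condKernel

/-- `μ` is a Markov measure. -/
def IsMarkovMeasure (N : ℕ) (μ : Measure (Path N)) [IsFiniteMeasure μ] : Prop :=
  ∀ (t : ℕ) (ht : 1 ≤ t) (_ : t < N),
    ∀ᵐ xs ∂(μ.map (proj N t)), nextK N μ t xs = mstep N μ t (xs ⟨t - 1, by omega⟩)

/-- A causal plan is causal quasi-Markov if (every version of) the conditional law of
`(x_{t+1}, y_{t+1})` given `(x_1,…,x_t,y_1,…,y_t)` depends a.s. only on `(x_t, y_1,…,y_t)`. -/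
def IsQuasiMarkov (N : ℕ) (γ : Measure (Path N × Path N)) : Prop :=
  ∀ (t : ℕ) (ht : 1 ≤ t) (_ : t < N),
    ∀ S : Kernel ((Fin t → ℝ) × (Fin t → ℝ)) (ℝ × ℝ), IsSFiniteKernel S →
      (γ.map (pairProj N t)) ⊗ₘ S
          = γ.map (fun p => (pairProj N t p, (coord N t p.1, coord N t p.2))) →
      ∃ κ : Kernel (ℝ × (Fin t → ℝ)) (ℝ × ℝ),
        ∀ᵐ z ∂(γ.map (pairProj N t)), S z = κ (z.1 ⟨t - 1, by omega⟩, z.2)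

/-- Topological support of a measure. -/
def msupport {α : Type*} [TopologicalSpace α] [MeasurableSpace α] (μ : Measure α) : Set α :=
  {x | ∀ U : Set α, IsOpen U → x ∈ U → μ U ≠ 0}

/-- `K` is a version of the disintegration of `μ` at time `t` which is weakly continuous on
the support of the first `t` coordinates of `μ`. -/
def WeaklyContinuousDisintegration (N t : ℕ) (μ : Measure (Path N))
    (K : Kernel (Fin t → ℝ) (Fin (N - t) → ℝ)) : Prop :=
  IsMarkovKernel K ∧
  (μ.map (proj N t)) ⊗ₘ K = μ.map (fun x => (proj N t x, tailProj N t x)) ∧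
  ∀ f : (Fin (N - t) → ℝ) →ᵇ ℝ,
    ContinuousOn (fun xs => ∫ z, f z ∂(K xs)) (msupport (μ.map (proj N t)))

/-- `μ` is successively weakly continuous. -/
def SuccWeakCont (N : ℕ) (μ : Measure (Path N)) : Prop :=
  ∀ t : ℕ, t < N → ∃ K : Kernel (Fin t → ℝ) (Fin (N - t) → ℝ),
    WeaklyContinuousDisintegration N t μ K

/-- The cumulative distribution function of a measure on `ℝ`. -/
def cdf1 (η : Measure ℝ) (z : ℝ) : ℝ := (η (Iic z)).toReal

/-- The left-continuous generalized inverse (quantile function) of the c.d.f. of `η`. -/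
def qinv (η : Measure ℝ) (u : ℝ) : ℝ := sInf {y : ℝ | u ≤ cdf1 η y}

/-- Partial Knothe–Rosenblatt path built from the "uniform" inputs `u`. -/
def krPartial (N : ℕ) (μ : Measure (Path N)) [IsFiniteMeasure μ] (u : ℕ → ℝ) :
    (t : ℕ) → Fin t → ℝ
  | 0 => Fin.elim0
  | t + 1 => snocFun t (krPartial N μ u t)
      (qinv (nextK N μ t (krPartial N μ u t)) (u t))

/-- The Knothe–Rosenblatt (quantile transform) path built from uniform inputs. -/
def krPath (N : ℕ) (μ : Measure (Path N)) [IsFiniteMeasure μ] (u : Path N) : Path N :=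
  krPartial N μ (fun n => if h : n < N then u ⟨n, h⟩ else 0) N

/-- The uniform distribution on `[0,1]`. -/
def unif01 : Measure ℝ := volume.restrict (Icc (0 : ℝ) 1)

instance : IsProbabilityMeasure unif01 := by
  constructor
  simp [unif01, Real.volume_Icc]

/-- N independent uniforms on `[0,1]`. -/
def uniformCube (N : ℕ) : Measure (Path N) := Measure.pi fun _ => unif01

instance (N : ℕ) : IsProbabilityMeasure (uniformCube N) :=
  inferInstanceAs (IsProbabilityMeasure (Measure.pi fun _ : Fin N => unif01))

/-- The (increasing) Knothe–Rosenblatt rearrangement of `(μ, ν)`: the joint law of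
`(X*, Y*)` where both paths are built from the same independent uniforms. -/
def krCoupling (N : ℕ) (μ ν : Measure (Path N)) [IsFiniteMeasure μ] [IsFiniteMeasure ν] :
    Measure (Path N × Path N) :=
  (uniformCube N).map (fun u => (krPath N μ u, krPath N ν u))

/-- Partial Knothe–Rosenblatt Monge map. -/
def krMapPartial (N : ℕ) (μ ν : Measure (Path N)) [IsFiniteMeasure μ] [IsFiniteMeasure ν]
    (x : Path N) : (t : ℕ) → Fin t → ℝ
  | 0 => Fin.elim0
  | t + 1 => snocFun t (krMapPartial N μ ν x t)
      (qinv (nextK N ν t (krMapPartial N μ ν x t))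
        (cdf1 (nextK N μ t (proj N t x)) (coord N t x)))

/-- The Knothe–Rosenblatt Monge map from `μ` to `ν`. -/
def krMap (N : ℕ) (μ ν : Measure (Path N)) [IsFiniteMeasure μ] [IsFiniteMeasure ν]
    (x : Path N) : Path N :=
  krMapPartial N μ ν x N

open Classical in
/-- Relative entropy `Ent(ν|μ)`, via the nonnegative integrand `f log f - f + 1`,
`f = dν/dμ`; equals `∫ log (dν/dμ) dν` for probability measures. -/
def relEnt {α : Type*} [MeasurableSpace α] (ν μ : Measure α) : ℝ≥0∞ :=
  if ν ≪ μ then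
    ∫⁻ x, ENNReal.ofReal
      ((ν.rnDeriv μ x).toReal * Real.log (ν.rnDeriv μ x).toReal
        - (ν.rnDeriv μ x).toReal + 1) ∂μ
  else ∞

/-- Universally measurable `ℝ≥0∞`-valued function. -/
def UnivMeasurable {α : Type*} [MeasurableSpace α] (f : α → ℝ≥0∞) : Prop :=
  ∀ P : Measure α, IsFiniteMeasure P → AEMeasurable f P

section PathSpace

@[fun_prop]
lemma measurable_proj (N t : ℕ) : Measurable (proj N t) := by
  refine measurable_pi_lambda _ fun i => ?_
  by_cases h : (i : ℕ) < N
  · simpa [proj, h] using measurable_pi_apply _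
  · simp [proj, h]

@[fun_prop]
lemma measurable_coord (N t : ℕ) : Measurable (coord N t) := by
  by_cases h : t < N
  · have e : coord N t = fun x => x ⟨t, h⟩ := by funext x; simp [coord, h]
    exact e ▸ measurable_pi_apply _
  · have e : coord N t = fun _ => 0 := by funext x; simp [coord, h]
    exact e ▸ measurable_const

@[fun_prop]
lemma measurable_pairProj (N t : ℕ) : Measurable (pairProj N t) :=
  ((measurable_proj N t).comp measurable_fst).prodMk ((measurable_proj N t).comp measurable_snd)

lemma measurable_pad (N t : ℕ) : Measurable (pad N t) := by
  refine measurable_pi_lambda _ fun i => ?_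
  by_cases h : (i : ℕ) < t
  · simpa [pad, h] using measurable_pi_apply _
  · simp [pad, h]

lemma measurable_snocFun (t : ℕ) :
    Measurable fun p : (Fin t → ℝ) × ℝ => snocFun t p.1 p.2 := by
  refine measurable_pi_lambda _ fun i => ?_
  by_cases h : (i : ℕ) < t
  · simp only [snocFun, dif_pos h]
    exact (measurable_pi_apply _).comp measurable_fst
  · simpa [snocFun, h] using measurable_snd

@[simp] lemma proj_two_one_apply (x : Path 2) (i : Fin 1) : proj 2 1 x i = x 0 := by
  simp [proj, Fin.fin_one_eq_zero i]

@[simp] lemma coord_two_one (x : Path 2) : coord 2 1 x = x 1 := by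
  simp [coord]

@[simp] lemma proj_snocFun (h : Fin 1 → ℝ) (r : ℝ) : proj 2 1 (snocFun 1 h r) = h := by
  funext i
  simp [proj, snocFun, Fin.fin_one_eq_zero i]

@[simp] lemma snocFun_one (h : Fin 1 → ℝ) (r : ℝ) : snocFun 1 h r 1 = r := by
  simp [snocFun]

lemma vecCons_apply_zero_eq (h : Fin 1 → ℝ) : ![h 0] = h := by
  funext i
  simp [Fin.fin_one_eq_zero i]

@[simp] lemma snocFun_proj_apply_one (x : Path 2) : snocFun 1 (proj 2 1 x) (x 1) = x := by
  funext i
  fin_cases i <;> simp [snocFun]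

def splitLast : Path 2 ≃ᵐ (Fin 1 → ℝ) × ℝ where
  toFun x := (proj 2 1 x, coord 2 1 x)
  invFun p := snocFun 1 p.1 p.2
  left_inv x := by simp
  right_inv p := by simp
  measurable_toFun := (measurable_proj 2 1).prodMk (measurable_coord 2 1)
  measurable_invFun := measurable_snocFun 1

@[simp] lemma splitLast_symm_apply (p : (Fin 1 → ℝ) × ℝ) :
    splitLast.symm p = snocFun 1 p.1 p.2 := rfl

lemma filt_le (N t : ℕ) : filt N t ≤ (inferInstance : MeasurableSpace (Path N)) :=
  (measurable_proj N t).comap_le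

lemma filt_two_two : filt 2 2 = (inferInstance : MeasurableSpace (Path 2)) := by
  have hid : proj 2 2 = id := by
    funext x i
    simp [proj, i.isLt]
  rw [filt, hid, MeasurableSpace.comap_id]

lemma measurable_filt_proj : Measurable[filt 2 1] (proj 2 1) :=
  Measurable.of_comap_le le_rfl

lemma exists_eq_comp_proj_of_measurable_filt {g : Path 2 → ℝ≥0∞} (hg : Measurable[filt 2 1] g) :
    ∃ G : (Fin 1 → ℝ) → ℝ≥0∞, Measurable G ∧ ∀ x, g x = G (proj 2 1 x) := by
  refine ⟨g ∘ pad 2 1, (hg.mono (filt_le 2 1) le_rfl).comp (measurable_pad 2 1), fun x => ?_⟩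
  obtain ⟨S, -, hS⟩ := hg (measurableSet_singleton (g x))
  have hpad : proj 2 1 (pad 2 1 (proj 2 1 x)) = proj 2 1 x := by
    funext i
    simp [pad, Fin.fin_one_eq_zero i]
  have hx : x ∈ proj 2 1 ⁻¹' S := by rw [hS]; rfl
  have : pad 2 1 (proj 2 1 x) ∈ proj 2 1 ⁻¹' S := by simpa [mem_preimage, hpad] using hx
  rw [hS] at this
  exact this.symm

end PathSpace

section AbsDiff

def absDiff (a b : ℝ≥0∞) : ℝ≥0∞ := (a - b) + (b - a)

lemma absDiff_le {a b c : ℝ≥0∞} (h₁ : a - b ≤ c) (h₂ : b - a ≤ c) : absDiff a b ≤ c := by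
  rcases le_total a b with h | h
  · simpa [absDiff, tsub_eq_zero_of_le h] using h₂
  · simpa [absDiff, tsub_eq_zero_of_le h] using h₁

lemma absDiff_of_le {a b : ℝ≥0∞} (h : b ≤ a) : absDiff a b = a - b := by
  simp [absDiff, tsub_eq_zero_of_le h]

lemma absDiff_of_ge {a b : ℝ≥0∞} (h : a ≤ b) : absDiff a b = b - a := by
  simp [absDiff, tsub_eq_zero_of_le h]

lemma absDiff_eq_ofReal_abs {a b : ℝ≥0∞} (ha : a ≠ ∞) (hb : b ≠ ∞) :
    absDiff a b = ENNReal.ofReal |a.toReal - b.toReal| := by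
  rcases le_total a b with h | h
  · rw [absDiff_of_ge h, abs_of_nonpos (by simp [ENNReal.toReal_mono hb h]), neg_sub,
      ← ENNReal.toReal_sub_of_le h hb, ENNReal.ofReal_toReal (by simp [hb])]
  · rw [absDiff_of_le h, abs_of_nonneg (by simp [ENNReal.toReal_mono ha h]),
      ← ENNReal.toReal_sub_of_le h ha, ENNReal.ofReal_toReal (by simp [ha])]

variable {α : Type*} [MeasurableSpace α]

lemma measurable_absDiff {f g : α → ℝ≥0∞} (hf : Measurable f) (hg : Measurable g) :
    Measurable fun x => absDiff (f x) (g x) :=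
  (hf.sub hg).add (hg.sub hf)

/-- Jensen's inequality for `|· - b|`: when `a - b` has a constant sign, `|a - b|` is affine
in `a`. -/
lemma lintegral_absDiff_le_of_lintegral_eq {π : Measure α} [IsProbabilityMeasure π]
    {a g : α → ℝ≥0∞} {b : ℝ≥0∞} (ha : Measurable a) (hg : Measurable g)
    (ha_fin : ∫⁻ x, a x ∂π ≠ ∞) (hsign : (∀ x, b ≤ a x) ∨ (∀ x, a x ≤ b))
    (hgb : ∫⁻ x, g x ∂π = b) :
    ∫⁻ x, absDiff (a x) b ∂π ≤ ∫⁻ x, absDiff (a x) (g x) ∂π := by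
  rcases hsign with h | h
  · have hb : b ≠ ∞ := by
      refine ne_top_of_le_ne_top ha_fin ?_
      simpa using lintegral_mono (μ := π) h
    calc ∫⁻ x, absDiff (a x) b ∂π = ∫⁻ x, a x - b ∂π :=
          lintegral_congr fun x => absDiff_of_le (h x)
      _ = ∫⁻ x, a x ∂π - ∫⁻ x, g x ∂π := by
          rw [lintegral_sub measurable_const (by simpa using hb) (ae_of_all _ h), hgb]
          simp
      _ ≤ ∫⁻ x, a x - g x ∂π := lintegral_sub_le g a hg
      _ ≤ ∫⁻ x, absDiff (a x) (g x) ∂π := lintegral_mono fun x => le_self_add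
  · calc ∫⁻ x, absDiff (a x) b ∂π = ∫⁻ x, b - a x ∂π :=
          lintegral_congr fun x => absDiff_of_ge (h x)
      _ = ∫⁻ x, g x ∂π - ∫⁻ x, a x ∂π := by
          rw [lintegral_sub ha ha_fin (ae_of_all _ h), hgb]
          simp
      _ ≤ ∫⁻ x, g x - a x ∂π := lintegral_sub_le a g ha
      _ ≤ ∫⁻ x, absDiff (a x) (g x) ∂π := lintegral_mono fun x => le_add_self

end AbsDiff

section LayerCake

lemma setOf_not_le_iff_le_eq_Ico (a b : ℝ) :
    {z : ℝ | ¬ (a ≤ z ↔ b ≤ z)} = Ico (min a b) (max a b) := by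
  ext z
  simp only [mem_ofPred_eq, mem_Ico, min_le_iff, lt_max_iff]
  by_cases ha : a ≤ z <;> by_cases hb : b ≤ z
  · simp [ha, hb, not_lt.2 ha, not_lt.2 hb]
  · simp [ha, hb, not_lt.2 ha, lt_of_not_ge hb]
  · simp [ha, hb, not_lt.2 hb, lt_of_not_ge ha]
  · simp [ha, hb, lt_of_not_ge ha, lt_of_not_ge hb]

lemma setOf_not_le_iff_le_eq_Ioc (a b : ℝ) :
    {u : ℝ | ¬ (u ≤ a ↔ u ≤ b)} = Ioc (min a b) (max a b) := by
  ext u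
  simp only [mem_ofPred_eq, mem_Ioc, min_lt_iff, le_max_iff]
  by_cases ha : u ≤ a <;> by_cases hb : u ≤ b
  · simp [ha, hb, not_lt.2 ha, not_lt.2 hb]
  · simp [ha, hb, lt_of_not_ge hb]
  · simp [ha, hb, lt_of_not_ge ha]
  · simp [ha, hb, lt_of_not_ge ha, lt_of_not_ge hb]

lemma ofReal_abs_sub_eq_volume (a b : ℝ) :
    ENNReal.ofReal |a - b| = volume {z : ℝ | ¬ (a ≤ z ↔ b ≤ z)} := by
  rw [setOf_not_le_iff_le_eq_Ico, Real.volume_Ico, max_sub_min_eq_abs, abs_sub_comm]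

variable {Ω : Type*} [MeasurableSpace Ω]

lemma measurableSet_not_le_iff_le {f g h : Ω → ℝ} (hf : Measurable f) (hg : Measurable g)
    (hh : Measurable h) : MeasurableSet {ω | ¬ (f ω ≤ h ω ↔ g ω ≤ h ω)} :=
  measurableSet_setOfPred.2 (((measurableSet_setOfPred.1 (measurableSet_le hf hh)).iff
    (measurableSet_setOfPred.1 (measurableSet_le hg hh))).not)

/-- `|f - g|` is the length of the interval between `f` and `g`; integrate and use Tonelli. -/
lemma lintegral_ofReal_abs_sub (π : Measure Ω) [SFinite π] {f g : Ω → ℝ}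
    (hf : Measurable f) (hg : Measurable g) :
    ∫⁻ ω, ENNReal.ofReal |f ω - g ω| ∂π = ∫⁻ z, π {ω | ¬ (f ω ≤ z ↔ g ω ≤ z)} := by
  have hS : MeasurableSet {p : Ω × ℝ | ¬ (f p.1 ≤ p.2 ↔ g p.1 ≤ p.2)} :=
    measurableSet_not_le_iff_le (hf.comp measurable_fst) (hg.comp measurable_fst) measurable_snd
  simp_rw [ofReal_abs_sub_eq_volume]
  exact (Measure.prod_apply hS).symm.trans (Measure.prod_apply_symm hS)

lemma absDiff_measure_le (π : Measure Ω) {f g : Ω → ℝ} (z : ℝ) :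
    absDiff (π {ω | f ω ≤ z}) (π {ω | g ω ≤ z}) ≤ π {ω | ¬ (f ω ≤ z ↔ g ω ≤ z)} := by
  refine absDiff_le ?_ ?_ <;> rw [tsub_le_iff_right] <;>
    refine (measure_mono fun ω hω => ?_).trans (measure_union_le _ _)
  · by_cases h : g ω ≤ z
    · exact Or.inr h
    · exact Or.inl fun hiff => h (hiff.1 hω)
  · by_cases h : f ω ≤ z
    · exact Or.inr h
    · exact Or.inl fun hiff => h (hiff.2 hω)

lemma lintegral_absDiff_measure_le (π : Measure Ω) [SFinite π] {f g : Ω → ℝ}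
    (hf : Measurable f) (hg : Measurable g) :
    ∫⁻ z, absDiff (π {ω | f ω ≤ z}) (π {ω | g ω ≤ z}) ≤ ∫⁻ ω, ENNReal.ofReal |f ω - g ω| ∂π := by
  rw [lintegral_ofReal_abs_sub π hf hg]
  exact lintegral_mono fun z => absDiff_measure_le π z

end LayerCake

section Kernels

variable {α β : Type*} [MeasurableSpace α] [MeasurableSpace β]

lemma setLIntegral_compProd_comp_fst (ρ : Measure α) [SFinite ρ] (κ : Kernel α β)
    [IsSFiniteKernel κ] {g : α → ℝ≥0∞} (hg : Measurable g) {S : Set (α × β)}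
    (hS : MeasurableSet S) :
    ∫⁻ w in S, g w.1 ∂(ρ ⊗ₘ κ) = ∫⁻ a, g a * κ a (Prod.mk a ⁻¹' S) ∂ρ := by
  have hm : Measurable (S.indicator fun w : α × β => g w.1) := (hg.comp measurable_fst).indicator hS
  rw [← lintegral_indicator hS, Measure.lintegral_compProd hm]
  refine lintegral_congr fun a => ?_
  rw [← lintegral_indicator_const (measurable_prodMk_left hS)]
  rfl

lemma ae_eq_of_forall_setLIntegral_prod_eq {σ : Measure (α × β)} [IsFiniteMeasure σ]
    {f g : α × β → ℝ≥0∞} (hf : Measurable f) (hg : Measurable g) (hf_fin : ∫⁻ p, f p ∂σ ≠ ∞)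
    (hg_fin : ∫⁻ p, g p ∂σ ≠ ∞)
    (h : ∀ A B, MeasurableSet A → MeasurableSet B →
      ∫⁻ p in A ×ˢ B, f p ∂σ = ∫⁻ p in A ×ˢ B, g p ∂σ) : f =ᵐ[σ] g := by
  have : IsFiniteMeasure (σ.withDensity f) := isFiniteMeasure_withDensity hf_fin
  have : IsFiniteMeasure (σ.withDensity g) := isFiniteMeasure_withDensity hg_fin
  have hfg : σ.withDensity f = σ.withDensity g := by
    refine ext_of_generate_finite _ generateFrom_prod.symm isPiSystem_prod ?_ ?_
    · rintro _ ⟨A, hA : MeasurableSet A, B, hB : MeasurableSet B, rfl⟩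
      rw [withDensity_apply _ (hA.prod hB), withDensity_apply _ (hA.prod hB)]
      exact h A B hA hB
    · rw [withDensity_apply _ MeasurableSet.univ, withDensity_apply _ MeasurableSet.univ,
        ← univ_prod_univ]
      exact h univ univ MeasurableSet.univ MeasurableSet.univ
  refine ae_eq_of_forall_setLIntegral_eq_of_sigmaFinite hf hg fun s hs _ => ?_
  rw [← withDensity_apply _ hs, ← withDensity_apply _ hs, hfg]

lemma lintegral_kernel_ne_top (σ : Measure α) [IsFiniteMeasure σ] (κ : Kernel α β)
    [IsMarkovKernel κ] (S : Set β) :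
    ∫⁻ a, κ a S ∂σ ≠ ∞ :=
  ne_top_of_le_ne_top (by simp) (lintegral_mono fun _ => prob_le_one (μ := κ _) (s := S))

lemma lintegral_eq_lintegral_condKernel_swap [StandardBorelSpace α] [Nonempty α]
    {ρ : Measure (α × β)} [IsFiniteMeasure ρ] {F : α × β → ℝ≥0∞} (hF : Measurable F) :
    ∫⁻ q, F q ∂ρ = ∫⁻ y, ∫⁻ x, F (x, y) ∂((ρ.map Prod.swap).condKernel y) ∂ρ.snd := by
  have h := Measure.lintegral_condKernel (ρ := ρ.map Prod.swap) (hF.comp measurable_swap)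
  rw [Measure.fst_map_swap, lintegral_map (hF.comp measurable_swap) measurable_swap] at h
  exact h.symm

lemma measurable_kernel_setOf_le (κ : Kernel α β) [IsSFiniteKernel κ] {f : β → ℝ}
    (hf : Measurable f) :
    Measurable fun p : α × ℝ => κ p.1 {b | f b ≤ p.2} :=
  (κ.comap Prod.fst measurable_fst).measurable_kernel_prodMk_left
    (measurableSet_le (hf.comp measurable_snd) measurable_fst.snd)

end Kernels

section Quantile

variable (η ρ : Measure ℝ) [IsProbabilityMeasure η] [IsProbabilityMeasure ρ]

lemma cdf1_eq_cdf : cdf1 η = cdf η := funext fun z => (cdf_eq_real η z).symm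

lemma cdf1_le_one (z : ℝ) : cdf1 η z ≤ 1 := by
  rw [cdf1_eq_cdf]
  exact cdf_le_one η z

lemma qinv_le_iff {u z : ℝ} (h0 : 0 < u) (h1 : u < 1) : qinv η u ≤ z ↔ u ≤ cdf1 η z := by
  rw [qinv, cdf1_eq_cdf]
  have hbdd : BddBelow {y : ℝ | u ≤ cdf η y} := by
    obtain ⟨y₀, hy₀⟩ := eventually_atBot.1 ((tendsto_cdf_atBot η).eventually_lt_const h0)
    refine ⟨y₀, fun y hy => le_of_not_gt fun hlt => ?_⟩
    exact (hy₀ y hlt.le).not_ge hy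
  have hne : {y : ℝ | u ≤ cdf η y}.Nonempty :=
    ((tendsto_cdf_atTop η).eventually_const_le h1).exists
  refine ⟨fun h => le_trans ?_ (monotone_cdf η h), fun h => csInf_le hbdd h⟩
  refine ge_of_tendsto (((cdf η).right_continuous _).mono Ioi_subset_Ici_self) ?_
  filter_upwards [self_mem_nhdsWithin] with y hy
  obtain ⟨s, hs, hsy⟩ := exists_lt_of_csInf_lt hne hy
  exact hs.trans (monotone_cdf η hsy.le)

def quantile (u : ℝ) : ℝ := if 0 < u ∧ u < 1 then qinv η u else 0

lemma quantile_le_iff {u : ℝ} (hu : u ∈ Ioo 0 1) (z : ℝ) :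
    quantile η u ≤ z ↔ u ≤ cdf1 η z := by
  rw [quantile, if_pos (show 0 < u ∧ u < 1 from hu), qinv_le_iff η hu.1 hu.2]

lemma measurable_quantile_kernel {W : Type*} [MeasurableSpace W] (κ : Kernel W ℝ)
    [IsMarkovKernel κ] : Measurable fun w : W × ℝ => quantile (κ w.1) w.2 := by
  refine measurable_of_Iic fun z => ?_
  have hI : MeasurableSet {w : W × ℝ | w.2 ∈ Ioo 0 1} := measurableSet_Ioo.preimage measurable_snd
  have hF : Measurable fun w : W × ℝ => cdf1 (κ w.1) z :=
    ENNReal.measurable_toReal.comp ((κ.measurable_coe measurableSet_Iic).comp measurable_fst)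
  have heq : (fun w : W × ℝ => quantile (κ w.1) w.2) ⁻¹' Iic z
      = ({w | w.2 ∈ Ioo 0 1} ∩ {w | w.2 ≤ cdf1 (κ w.1) z})
        ∪ ({w | w.2 ∈ Ioo 0 1}ᶜ ∩ {_w | (0 : ℝ) ≤ z}) := by
    ext w
    by_cases hw : w.2 ∈ Ioo 0 1
    · simp only [mem_preimage, mem_Iic, mem_union, mem_inter_iff, mem_ofPred_eq, mem_compl_iff,
        hw, not_true_eq_false, true_and, false_and, or_false]
      exact quantile_le_iff _ hw z
    · simp only [mem_preimage, mem_Iic, mem_union, mem_inter_iff, mem_ofPred_eq, mem_compl_iff,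
        hw, not_false_eq_true, true_and, false_and, false_or]
      rw [quantile, if_neg (show ¬ (0 < w.2 ∧ w.2 < 1) from hw)]
  rw [heq]
  exact (hI.inter (measurableSet_le measurable_snd hF)).union
    (hI.compl.inter (MeasurableSet.const _))

lemma measurable_quantile : Measurable (quantile η) :=
  (measurable_quantile_kernel (Kernel.const Unit η)).comp
    (measurable_const.prodMk measurable_id : Measurable fun u : ℝ => ((), u))

lemma unif01_eq_restrict_Ioo : unif01 = volume.restrict (Ioo 0 1) :=
  (Measure.restrict_congr_set Ioo_ae_eq_Icc).symm

lemma volume_Ioo_inter_Ioc {m M : ℝ} (h0 : 0 ≤ m) (h1 : M ≤ 1) :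
    volume (Ioo 0 1 ∩ Ioc m M) = ENNReal.ofReal (M - m) := by
  refine le_antisymm ((measure_mono inter_subset_right).trans_eq Real.volume_Ioc) ?_
  rw [← Real.volume_Ioo]
  exact measure_mono fun u hu => ⟨⟨h0.trans_lt hu.1, hu.2.trans_le h1⟩, hu.1, hu.2.le⟩

lemma map_quantile : unif01.map (quantile η) = η := by
  refine Measure.ext_of_Iic _ _ fun z => ?_
  have hset : Ioo 0 1 ∩ quantile η ⁻¹' Iic z = Ioo 0 1 ∩ Ioc 0 (cdf1 η z) := by
    ext u
    constructor
    · rintro ⟨hu, hq⟩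
      exact ⟨hu, hu.1, (quantile_le_iff η hu z).1 hq⟩
    · rintro ⟨hu, -, hc⟩
      exact ⟨hu, (quantile_le_iff η hu z).2 hc⟩
  rw [Measure.map_apply (measurable_quantile η) measurableSet_Iic, unif01_eq_restrict_Ioo,
    Measure.restrict_apply' measurableSet_Ioo, inter_comm, hset,
    volume_Ioo_inter_Ioc le_rfl (cdf1_le_one η z), sub_zero,
    cdf1, ENNReal.ofReal_toReal (measure_ne_top _ _)]

lemma lintegral_abs_quantile_sub :
    ∫⁻ u, ENNReal.ofReal |quantile η u - quantile ρ u| ∂unif01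
      = ∫⁻ z, absDiff (η (Iic z)) (ρ (Iic z)) := by
  rw [lintegral_ofReal_abs_sub unif01 (measurable_quantile η) (measurable_quantile ρ)]
  refine lintegral_congr fun z => ?_
  have hset : Ioo 0 1 ∩ {u | ¬ (quantile η u ≤ z ↔ quantile ρ u ≤ z)}
      = Ioo 0 1 ∩ Ioc (min (cdf1 η z) (cdf1 ρ z)) (max (cdf1 η z) (cdf1 ρ z)) := by
    rw [← setOf_not_le_iff_le_eq_Ioc]
    ext u
    refine and_congr_right fun hu => ?_
    simp only [mem_ofPred_eq, quantile_le_iff _ hu]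
  rw [unif01_eq_restrict_Ioo, Measure.restrict_apply' measurableSet_Ioo, inter_comm, hset,
    volume_Ioo_inter_Ioc (m := min (cdf1 η z) (cdf1 ρ z))
      (le_min ENNReal.toReal_nonneg ENNReal.toReal_nonneg)
      (max_le (cdf1_le_one η z) (cdf1_le_one ρ z)), max_sub_min_eq_abs, abs_sub_comm,
    absDiff_eq_ofReal_abs (measure_ne_top _ _) (measure_ne_top _ _), cdf1, cdf1]

lemma map_prod_unif01_quantile {G W : Type*} [MeasurableSpace G] [MeasurableSpace W]
    (ρ : Measure G) [IsProbabilityMeasure ρ] {φ : G → W} (hφ : Measurable φ)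
    (κ : Kernel W ℝ) [IsMarkovKernel κ] :
    (ρ.prod unif01).map (fun w => (φ w.1, quantile (κ (φ w.1)) w.2)) = ρ.map φ ⊗ₘ κ := by
  have hm : Measurable fun w : G × ℝ => (φ w.1, quantile (κ (φ w.1)) w.2) :=
    (hφ.comp measurable_fst).prodMk
      ((measurable_quantile_kernel κ).comp ((hφ.comp measurable_fst).prodMk measurable_snd))
  have : IsProbabilityMeasure (ρ.map φ) := Measure.isProbabilityMeasure_map hφ.aemeasurable
  refine ext_of_generate_finite _ generateFrom_prod.symm isPiSystem_prod ?_ (by simp [hm])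
  rintro _ ⟨A, hA : MeasurableSet A, B, hB : MeasurableSet B, rfl⟩
  dsimp only
  rw [Measure.map_apply hm (hA.prod hB), Measure.compProd_apply_prod hA hB,
    setLIntegral_map hA (κ.measurable_coe hB) hφ, Measure.prod_apply (hm (hA.prod hB)),
    ← lintegral_indicator (hφ hA)]
  refine lintegral_congr fun g => ?_
  by_cases hg : φ g ∈ A
  · have hslice : Prod.mk g ⁻¹' ((fun w : G × ℝ => (φ w.1, quantile (κ (φ w.1)) w.2)) ⁻¹'
        A ×ˢ B) = quantile (κ (φ g)) ⁻¹' B := by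
      ext u
      simp [hg]
    rw [hslice, indicator_of_mem (show g ∈ φ ⁻¹' A from hg),
      ← Measure.map_apply (measurable_quantile _) hB, map_quantile]
  · have hslice : Prod.mk g ⁻¹' ((fun w : G × ℝ => (φ w.1, quantile (κ (φ w.1)) w.2)) ⁻¹'
        A ×ˢ B) = ∅ := by
      ext u
      simp [hg]
    rw [hslice, indicator_of_notMem (show g ∉ φ ⁻¹' A from hg), measure_empty]

end Quantile

section Disintegration

variable {N : ℕ}

instance (μ : Measure (Path N)) [IsFiniteMeasure μ] (t : ℕ) : IsMarkovKernel (nextK N μ t) := by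
  unfold nextK
  infer_instance

instance (γ : Measure (Path N × Path N)) [IsFiniteMeasure γ] (t : ℕ) :
    IsMarkovKernel (stepK N γ t) := by
  unfold stepK
  infer_instance

lemma compProd_nextK (μ : Measure (Path N)) [IsFiniteMeasure μ] (t : ℕ) :
    μ.map (proj N t) ⊗ₘ nextK N μ t = μ.map fun x => (proj N t x, coord N t x) := by
  rw [← Measure.fst_map_prodMk (μ := μ) (measurable_coord N t)]
  exact Measure.disintegrate _ (Measure.condKernel _)

lemma compProd_stepK (γ : Measure (Path N × Path N)) [IsFiniteMeasure γ] (t : ℕ) :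
    γ.map (pairProj N t) ⊗ₘ stepK N γ t
      = γ.map fun p => (pairProj N t p, (coord N t p.1, coord N t p.2)) := by
  rw [← Measure.fst_map_prodMk (μ := γ)
    (by fun_prop : Measurable fun p : Path N × Path N => (coord N t p.1, coord N t p.2))]
  exact Measure.disintegrate _ (Measure.condKernel _)

lemma setLIntegral_stepK (γ : Measure (Path N × Path N)) [IsFiniteMeasure γ] {t : ℕ}
    {R : Set ((Fin t → ℝ) × (Fin t → ℝ))} (hR : MeasurableSet R) {S : Set (ℝ × ℝ)}
    (hS : MeasurableSet S) :
    ∫⁻ q in R, stepK N γ t q S ∂(γ.map (pairProj N t))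
      = γ ((fun p => (pairProj N t p, (coord N t p.1, coord N t p.2))) ⁻¹' (R ×ˢ S)) := by
  rw [← Measure.compProd_apply_prod hR hS, compProd_stepK, Measure.map_apply (by fun_prop)
    (hR.prod hS)]

lemma setLIntegral_proj_coord_preimage (μ : Measure (Path N)) [IsFiniteMeasure μ] {t : ℕ}
    {F : (Fin t → ℝ) → ℝ≥0∞} (hF : Measurable F) {A : Set (Fin t → ℝ)} (hA : MeasurableSet A)
    {C : Set ℝ} (hC : MeasurableSet C) :
    ∫⁻ x in (fun x => (proj N t x, coord N t x)) ⁻¹' (A ×ˢ C), F (proj N t x) ∂μ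
      = ∫⁻ h in A, F h * nextK N μ t h C ∂(μ.map (proj N t)) := by
  have hG : Measurable fun w : (Fin t → ℝ) × ℝ => F w.1 := hF.comp measurable_fst
  calc ∫⁻ x in (fun x => (proj N t x, coord N t x)) ⁻¹' (A ×ˢ C), F (proj N t x) ∂μ
      = ∫⁻ w in A ×ˢ C, F w.1 ∂(μ.map fun x => (proj N t x, coord N t x)) :=
        (setLIntegral_map (hA.prod hC) hG
          ((measurable_proj N t).prodMk (measurable_coord N t))).symm
    _ = ∫⁻ h in A, F h * nextK N μ t h C ∂(μ.map (proj N t)) := by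
        rw [← compProd_nextK, Measure.setLIntegral_compProd hG hA hC]
        exact setLIntegral_congr_fun hA fun h _ => by simp

lemma map_splitLast (μ : Measure (Path 2)) [IsFiniteMeasure μ] :
    μ.map splitLast = μ.map (proj 2 1) ⊗ₘ nextK 2 μ 1 :=
  (compProd_nextK μ 1).symm

lemma IsCoupling.isProbabilityMeasure {α β : Type*} [MeasurableSpace α] [MeasurableSpace β]
    {μ : Measure α} [IsProbabilityMeasure μ] {ν : Measure β} {γ : Measure (α × β)}
    (hγ : IsCoupling μ ν γ) : IsProbabilityMeasure γ := by
  constructor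
  rw [← measure_univ (μ := μ), ← hγ.1, Measure.map_apply measurable_fst MeasurableSet.univ,
    preimage_univ]

lemma IsCoupling.fst_map_pairProj {μ ν : Measure (Path N)} {γ : Measure (Path N × Path N)}
    (hγ : IsCoupling μ ν γ) (t : ℕ) : (γ.map (pairProj N t)).fst = μ.map (proj N t) := by
  rw [Measure.fst, Measure.map_map measurable_fst (measurable_pairProj N t), ← hγ.1,
    Measure.map_map (measurable_proj N t) measurable_fst]
  rfl

lemma IsCoupling.snd_map_pairProj {μ ν : Measure (Path N)} {γ : Measure (Path N × Path N)}
    (hγ : IsCoupling μ ν γ) (t : ℕ) : (γ.map (pairProj N t)).snd = ν.map (proj N t) := by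
  rw [Measure.snd, Measure.map_map measurable_snd (measurable_pairProj N t), ← hγ.2,
    Measure.map_map (measurable_proj N t) measurable_snd]
  rfl

end Disintegration

section QuantileCoupling

def quantileStep (κ : Kernel (Fin 1 → ℝ) ℝ) (h : Fin 1 → ℝ) (u : ℝ) : Path 2 :=
  snocFun 1 h (quantile (κ h) u)

lemma measurable_quantileStep (κ : Kernel (Fin 1 → ℝ) ℝ) [IsMarkovKernel κ] :
    Measurable fun p : (Fin 1 → ℝ) × ℝ => quantileStep κ p.1 p.2 :=
  (measurable_snocFun 1).comp (measurable_fst.prodMk (measurable_quantile_kernel κ))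

def quantileCoupling (σ : Measure ((Fin 1 → ℝ) × (Fin 1 → ℝ))) (μ ν : Measure (Path 2))
    [IsFiniteMeasure μ] [IsFiniteMeasure ν] : Measure (Path 2 × Path 2) :=
  (σ.prod unif01).map fun w =>
    (quantileStep (nextK 2 μ 1) w.1.1 w.2, quantileStep (nextK 2 ν 1) w.1.2 w.2)

variable (σ : Measure ((Fin 1 → ℝ) × (Fin 1 → ℝ)))
  {μ ν : Measure (Path 2)} [IsProbabilityMeasure μ] [IsProbabilityMeasure ν]

lemma measurable_quantileCoupling_map :
    Measurable fun w : ((Fin 1 → ℝ) × (Fin 1 → ℝ)) × ℝ =>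
      (quantileStep (nextK 2 μ 1) w.1.1 w.2, quantileStep (nextK 2 ν 1) w.1.2 w.2) :=
  ((measurable_quantileStep _).comp (measurable_fst.fst.prodMk measurable_snd)).prodMk
    ((measurable_quantileStep _).comp (measurable_fst.snd.prodMk measurable_snd))

lemma quantileCoupling_map_fst [IsProbabilityMeasure σ] (hσ : σ.map Prod.fst = μ.map (proj 2 1)) :
    (quantileCoupling σ μ ν).map Prod.fst = μ := by
  rw [quantileCoupling, Measure.map_map measurable_fst measurable_quantileCoupling_map]
  have hstep : (Prod.fst ∘ fun w : ((Fin 1 → ℝ) × (Fin 1 → ℝ)) × ℝ =>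
      (quantileStep (nextK 2 μ 1) w.1.1 w.2, quantileStep (nextK 2 ν 1) w.1.2 w.2))
      = splitLast.symm ∘ fun w => (w.1.1, quantile (nextK 2 μ 1 w.1.1) w.2) := rfl
  have hm : Measurable fun w : ((Fin 1 → ℝ) × (Fin 1 → ℝ)) × ℝ =>
      (w.1.1, quantile (nextK 2 μ 1 w.1.1) w.2) :=
    measurable_fst.fst.prodMk ((measurable_quantile_kernel (nextK 2 μ 1)).comp
      (measurable_fst.fst.prodMk measurable_snd))
  rw [hstep, ← Measure.map_map splitLast.symm.measurable hm,
    map_prod_unif01_quantile σ measurable_fst, hσ, ← map_splitLast,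
    MeasurableEquiv.map_symm_map]

lemma quantileCoupling_map_swap [IsProbabilityMeasure σ] :
    (quantileCoupling σ μ ν).map Prod.swap = quantileCoupling (σ.map Prod.swap) ν μ := by
  have hswap : (σ.map Prod.swap).prod unif01 = (σ.prod unif01).map (Prod.map Prod.swap id) := by
    conv_lhs => rw [← Measure.map_id (μ := unif01)]
    exact Measure.map_prod_map _ _ measurable_swap measurable_id
  rw [quantileCoupling, Measure.map_map measurable_swap measurable_quantileCoupling_map,
    quantileCoupling, hswap, Measure.map_map measurable_quantileCoupling_map
      (measurable_swap.prodMap measurable_id)]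
  rfl

lemma quantileCoupling_map_snd [IsProbabilityMeasure σ] (hσ : σ.map Prod.snd = ν.map (proj 2 1)) :
    (quantileCoupling σ μ ν).map Prod.snd = ν := by
  have : IsProbabilityMeasure (σ.map Prod.swap) :=
    Measure.isProbabilityMeasure_map measurable_swap.aemeasurable
  have hsnd : (Prod.snd : Path 2 × Path 2 → Path 2) = Prod.fst ∘ Prod.swap := rfl
  rw [hsnd, ← Measure.map_map measurable_fst measurable_swap, quantileCoupling_map_swap,
    quantileCoupling_map_fst]
  rwa [Measure.map_map measurable_fst measurable_swap]

lemma quantileCoupling_map_pairProj :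
    (quantileCoupling σ μ ν).map (pairProj 2 1) = σ := by
  rw [quantileCoupling, Measure.map_map (measurable_pairProj 2 1) measurable_quantileCoupling_map]
  have hfst : (pairProj 2 1 ∘ fun w : ((Fin 1 → ℝ) × (Fin 1 → ℝ)) × ℝ =>
      (quantileStep (nextK 2 μ 1) w.1.1 w.2, quantileStep (nextK 2 ν 1) w.1.2 w.2)) = Prod.fst := by
    funext w
    simp [pairProj, quantileStep]
  rw [hfst, Measure.map_fst_prod]
  simp

lemma quantileCoupling_map_pairProj_coord [IsProbabilityMeasure σ] :
    (quantileCoupling σ μ ν).map (fun p => (pairProj 2 1 p, coord 2 1 p.1))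
      = σ ⊗ₘ (nextK 2 μ 1).comap Prod.fst measurable_fst := by
  have h := map_prod_unif01_quantile σ measurable_id ((nextK 2 μ 1).comap Prod.fst measurable_fst)
  rw [Measure.map_id] at h
  rw [← h, quantileCoupling, Measure.map_map (by fun_prop) measurable_quantileCoupling_map]
  congr 1
  funext w
  simp [pairProj, quantileStep]

lemma lintegral_abs_quantileCoupling [IsProbabilityMeasure σ] :
    ∫⁻ p, ENNReal.ofReal |p.1 1 - p.2 1| ∂(quantileCoupling σ μ ν)
      = ∫⁻ q, ∫⁻ z, absDiff (nextK 2 μ 1 q.1 (Iic z)) (nextK 2 ν 1 q.2 (Iic z)) ∂volume ∂σ := by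
  have habs : Measurable fun p : Path 2 × Path 2 => ENNReal.ofReal |p.1 1 - p.2 1| := by
    fun_prop
  rw [quantileCoupling, lintegral_map habs measurable_quantileCoupling_map, lintegral_prod]
  · refine lintegral_congr fun q => ?_
    simpa [quantileStep] using lintegral_abs_quantile_sub (nextK 2 μ 1 q.1) (nextK 2 ν 1 q.2)
  · exact (habs.comp measurable_quantileCoupling_map).aemeasurable

end QuantileCoupling

section QuantileCouplingCausal

variable {σ : Measure ((Fin 1 → ℝ) × (Fin 1 → ℝ))} [IsProbabilityMeasure σ]
  {μ ν : Measure (Path 2)} [IsProbabilityMeasure μ] [IsProbabilityMeasure ν]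

lemma quantileCoupling_prod_proj_preimage (hσ : σ.map Prod.fst = μ.map (proj 2 1))
    {C : Set (Path 2)} (hC : MeasurableSet C) {A : Set (Fin 1 → ℝ)} (hA : MeasurableSet A) :
    quantileCoupling σ μ ν (C ×ˢ (proj 2 1 ⁻¹' A))
      = ∫⁻ x in C, σ.condKernel (proj 2 1 x) A ∂μ := by
  set κ := nextK 2 μ 1
  set C' := splitLast.symm ⁻¹' C
  have hC' : MeasurableSet C' := splitLast.symm.measurable hC
  set T : Set (((Fin 1 → ℝ) × (Fin 1 → ℝ)) × ℝ) := {q | (q.1.1, q.2) ∈ C' ∧ q.1.2 ∈ A}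
  have hT : MeasurableSet T :=
    (hC'.preimage (measurable_fst.fst.prodMk measurable_snd)).inter
      (hA.preimage measurable_fst.snd)
  have hLHS : quantileCoupling σ μ ν (C ×ˢ (proj 2 1 ⁻¹' A))
      = ∫⁻ h, κ h (Prod.mk h ⁻¹' C') * σ.condKernel h A ∂(μ.map (proj 2 1)) := by
    have hpre : (fun p => (pairProj 2 1 p, coord 2 1 p.1)) ⁻¹' T = C ×ˢ (proj 2 1 ⁻¹' A) := by
      ext p
      simp [T, C', pairProj]
    rw [← hpre, ← Measure.map_apply (by fun_prop) hT, quantileCoupling_map_pairProj_coord,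
      Measure.compProd_apply hT, ← hσ, ← Measure.fst, ← Measure.lintegral_condKernel]
    · refine lintegral_congr fun h => ?_
      rw [← lintegral_indicator_const hA]
      refine lintegral_congr fun k => ?_
      by_cases hk : k ∈ A <;> simp [T, κ, hk, Kernel.comap_apply, preimage]
    · exact (κ.comap Prod.fst measurable_fst).measurable_kernel_prodMk_left hT
  have hRHS : ∫⁻ x in C, σ.condKernel (proj 2 1 x) A ∂μ
      = ∫⁻ h, σ.condKernel h A * κ h (Prod.mk h ⁻¹' C') ∂(μ.map (proj 2 1)) := by
    have hpre : splitLast ⁻¹' C' = C := by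
      ext x
      simp only [C', mem_preimage, MeasurableEquiv.symm_apply_apply]
    rw [← setLIntegral_compProd_comp_fst _ _ (σ.condKernel.measurable_coe hA) hC',
      ← map_splitLast, setLIntegral_map (f := fun w : (Fin 1 → ℝ) × ℝ => σ.condKernel w.1 A) hC'
        ((σ.condKernel.measurable_coe hA).comp measurable_fst) splitLast.measurable, hpre]
    rfl
  rw [hLHS, hRHS]
  simp_rw [mul_comm]

lemma isCausal_quantileCoupling (hσ₁ : σ.map Prod.fst = μ.map (proj 2 1))
    (hσ₂ : σ.map Prod.snd = ν.map (proj 2 1)) : IsCausal 2 μ ν (quantileCoupling σ μ ν) := by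
  refine ⟨⟨quantileCoupling_map_fst σ hσ₁, quantileCoupling_map_snd σ hσ₂⟩,
    fun K _ hK t ht₁ ht₂ B hB => ?_⟩
  obtain rfl | rfl : t = 1 ∨ t = 2 := by omega
  · obtain ⟨A, hA, rfl⟩ := hB
    refine ⟨fun x => σ.condKernel (proj 2 1 x) A,
      (σ.condKernel.measurable_coe hA).comp measurable_filt_proj,
      ae_eq_of_forall_setLIntegral_eq_of_sigmaFinite (K.measurable_coe ((measurable_proj 2 1) hA))
        ((σ.condKernel.measurable_coe hA).comp (measurable_proj 2 1)) fun C hC _ => ?_⟩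
    rw [← Measure.compProd_apply_prod hC ((measurable_proj 2 1) hA), hK,
      quantileCoupling_prod_proj_preimage hσ₁ hC hA]
  · rw [filt_two_two] at hB ⊢
    exact ⟨fun x => K x B, K.measurable_coe hB, EventuallyEq.rfl⟩

lemma isBicausal_quantileCoupling (hσ₁ : σ.map Prod.fst = μ.map (proj 2 1))
    (hσ₂ : σ.map Prod.snd = ν.map (proj 2 1)) : IsBicausal 2 μ ν (quantileCoupling σ μ ν) := by
  have : IsProbabilityMeasure (σ.map Prod.swap) :=
    Measure.isProbabilityMeasure_map measurable_swap.aemeasurable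
  refine ⟨isCausal_quantileCoupling hσ₁ hσ₂, ?_⟩
  rw [quantileCoupling_map_swap]
  refine isCausal_quantileCoupling ?_ ?_
  · rwa [Measure.map_map measurable_fst measurable_swap]
  · rwa [Measure.map_map measurable_snd measurable_swap]

end QuantileCouplingCausal

section CausalLowerBound

variable {μ ν : Measure (Path 2)} {γ : Measure (Path 2 × Path 2)}

lemma IsCausal.exists_setLIntegral_prod_proj_preimage [IsProbabilityMeasure μ]
    (hγ : IsCausal 2 μ ν γ)
    {B : Set (Fin 1 → ℝ)} (hB : MeasurableSet B) :
    ∃ G : (Fin 1 → ℝ) → ℝ≥0∞, Measurable G ∧ ∀ {D : Set (Path 2)}, MeasurableSet D →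
      ∀ {f : Path 2 → ℝ≥0∞}, Measurable f →
        ∫⁻ p in D ×ˢ (proj 2 1 ⁻¹' B), f p.1 ∂γ = ∫⁻ x in D, f x * G (proj 2 1 x) ∂μ := by
  have : IsProbabilityMeasure γ := hγ.1.isProbabilityMeasure
  have hdis : μ ⊗ₘ γ.condKernel = γ := by
    rw [← hγ.1.1]
    exact γ.disintegrate γ.condKernel
  obtain ⟨g, hg, hKg⟩ :=
    hγ.2 γ.condKernel inferInstance hdis 1 le_rfl (by norm_num) _ ⟨B, hB, rfl⟩
  obtain ⟨G, hG, hgG⟩ := exists_eq_comp_proj_of_measurable_filt hg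
  refine ⟨G, hG, fun hD f hf => ?_⟩
  rw [← hdis, Measure.setLIntegral_compProd (f := fun p : Path 2 × Path 2 => f p.1)
    (hf.comp measurable_fst) hD ((measurable_proj 2 1) hB)]
  refine setLIntegral_congr_fun_ae hD ?_
  filter_upwards [hKg] with x hx _
  rw [setLIntegral_const, hx, hgG]

lemma IsCausal.stepK_fst_ae_eq [IsProbabilityMeasure μ] [IsFiniteMeasure γ]
    (hγ : IsCausal 2 μ ν γ) (z : ℝ) :
    (fun q => stepK 2 γ 1 q {v | v.1 ≤ z})
      =ᵐ[γ.map (pairProj 2 1)] fun q => nextK 2 μ 1 q.1 (Iic z) := by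
  have hS : MeasurableSet {v : ℝ × ℝ | v.1 ≤ z} := measurableSet_le measurable_fst measurable_const
  have hκ : Measurable fun h => nextK 2 μ 1 h (Iic z) :=
    (nextK 2 μ 1).measurable_coe measurableSet_Iic
  refine ae_eq_of_forall_setLIntegral_prod_eq ((stepK 2 γ 1).measurable_coe hS)
    (hκ.comp measurable_fst) (lintegral_kernel_ne_top _ _ _)
    (lintegral_kernel_ne_top _ ((nextK 2 μ 1).comap Prod.fst measurable_fst) _)
    fun A B hA hB => ?_
  obtain ⟨G, hG, hγG⟩ := hγ.exists_setLIntegral_prod_proj_preimage hB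
  set D := (fun x => (proj 2 1 x, coord 2 1 x)) ⁻¹' (A ×ˢ Iic z)
  have hD : MeasurableSet D := (by fun_prop : Measurable fun x : Path 2 =>
    (proj 2 1 x, coord 2 1 x)) (hA.prod measurableSet_Iic)
  calc ∫⁻ q in A ×ˢ B, stepK 2 γ 1 q {v | v.1 ≤ z} ∂(γ.map (pairProj 2 1))
      = γ (D ×ˢ (proj 2 1 ⁻¹' B)) := by
        rw [setLIntegral_stepK γ (hA.prod hB) hS]
        congr 1
        ext p
        simp only [D, pairProj, mem_preimage, mem_prod, mem_Iic, mem_ofPred_eq]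
        tauto
    _ = ∫⁻ x in D, 1 * G (proj 2 1 x) ∂μ := by
        rw [← setLIntegral_one]
        exact hγG hD measurable_const
    _ = ∫⁻ h in A, G h * nextK 2 μ 1 h (Iic z) ∂(μ.map (proj 2 1)) := by
        simp_rw [one_mul]
        exact setLIntegral_proj_coord_preimage μ hG hA measurableSet_Iic
    _ = ∫⁻ x in proj 2 1 ⁻¹' A, nextK 2 μ 1 (proj 2 1 x) (Iic z) * G (proj 2 1 x) ∂μ := by
        rw [setLIntegral_map (f := fun h => G h * nextK 2 μ 1 h (Iic z)) hA (hG.mul hκ)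
          (measurable_proj 2 1)]
        simp_rw [mul_comm]
    _ = ∫⁻ p in (proj 2 1 ⁻¹' A) ×ˢ (proj 2 1 ⁻¹' B), nextK 2 μ 1 (proj 2 1 p.1) (Iic z) ∂γ :=
        (hγG ((measurable_proj 2 1) hA) (hκ.comp (measurable_proj 2 1))).symm
    _ = ∫⁻ q in A ×ˢ B, nextK 2 μ 1 q.1 (Iic z) ∂(γ.map (pairProj 2 1)) := by
        rw [setLIntegral_map (f := fun q : (Fin 1 → ℝ) × (Fin 1 → ℝ) => nextK 2 μ 1 q.1 (Iic z))
          (hA.prod hB) (hκ.comp measurable_fst) (measurable_pairProj 2 1)]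
        rfl

lemma IsCoupling.lintegral_stepK_snd_ae_eq [IsProbabilityMeasure ν] [IsFiniteMeasure γ]
    (hγ : IsCoupling μ ν γ) (z : ℝ) :
    (fun y => ∫⁻ x, stepK 2 γ 1 (x, y) {v | v.2 ≤ z}
        ∂(((γ.map (pairProj 2 1)).map Prod.swap).condKernel y))
      =ᵐ[ν.map (proj 2 1)] fun y => nextK 2 ν 1 y (Iic z) := by
  have hS : MeasurableSet {v : ℝ × ℝ | v.2 ≤ z} := measurableSet_le measurable_snd measurable_const
  have hF : Measurable fun w : (Fin 1 → ℝ) × (Fin 1 → ℝ) => stepK 2 γ 1 w.swap {v | v.2 ≤ z} :=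
    ((stepK 2 γ 1).measurable_coe hS).comp measurable_swap
  refine ae_eq_of_forall_setLIntegral_eq_of_sigmaFinite hF.lintegral_kernel_prod_right'
    ((nextK 2 ν 1).measurable_coe measurableSet_Iic) fun B hB _ => ?_
  set D := (fun y => (proj 2 1 y, coord 2 1 y)) ⁻¹' (B ×ˢ Iic z)
  have hD : MeasurableSet D := (by fun_prop : Measurable fun y : Path 2 =>
    (proj 2 1 y, coord 2 1 y)) (hB.prod measurableSet_Iic)
  calc ∫⁻ y in B, ∫⁻ x, stepK 2 γ 1 (x, y) {v | v.2 ≤ z}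
        ∂(((γ.map (pairProj 2 1)).map Prod.swap).condKernel y) ∂(ν.map (proj 2 1))
      = ∫⁻ w in B ×ˢ univ, stepK 2 γ 1 w.swap {v | v.2 ≤ z}
          ∂((γ.map (pairProj 2 1)).map Prod.swap) := by
        have h := Measure.setLIntegral_condKernel (ρ := (γ.map (pairProj 2 1)).map Prod.swap) hF hB
          MeasurableSet.univ
        rw [Measure.fst_map_swap, hγ.snd_map_pairProj 1] at h
        simpa using h
    _ = ∫⁻ q in univ ×ˢ B, stepK 2 γ 1 q {v | v.2 ≤ z} ∂(γ.map (pairProj 2 1)) := by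
        rw [setLIntegral_map (hB.prod MeasurableSet.univ) hF measurable_swap, preimage_swap_prod]
        rfl
    _ = γ (univ ×ˢ D) := by
        rw [setLIntegral_stepK γ (MeasurableSet.univ.prod hB) hS]
        congr 1
        ext p
        simp [D, pairProj]
    _ = ∫⁻ y in D, 1 ∂ν := by
        rw [univ_prod, ← Measure.map_apply measurable_snd hD, hγ.2, setLIntegral_one]
    _ = ∫⁻ y in B, nextK 2 ν 1 y (Iic z) ∂(ν.map (proj 2 1)) := by
        simpa only [one_mul] using setLIntegral_proj_coord_preimage ν (F := fun _ => (1 : ℝ≥0∞))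
          measurable_const hB measurableSet_Iic

def CdfComparable (μ ν : Measure (Path 2)) [IsFiniteMeasure μ] [IsFiniteMeasure ν] : Prop :=
  ∀ z y1 : ℝ,
    (∀ x1 : ℝ, nextK 2 ν 1 ![y1] (Iic z) ≤ nextK 2 μ 1 ![x1] (Iic z)) ∨
    (∀ x1 : ℝ, nextK 2 μ 1 ![x1] (Iic z) ≤ nextK 2 ν 1 ![y1] (Iic z))

/-- The ordering hypothesis makes `F_{μ^{x₁}}(z) - F_{ν^{y₁}}(z)` of constant sign in `x₁`, so
Jensen's inequality applies in `x₁` given `y₁`. -/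
lemma IsCausal.lintegral_absDiff_nextK_le [IsProbabilityMeasure μ] [IsProbabilityMeasure ν]
    [IsFiniteMeasure γ] (hγ : IsCausal 2 μ ν γ) (hcdf : CdfComparable μ ν) (z : ℝ) :
    ∫⁻ q, absDiff (nextK 2 μ 1 q.1 (Iic z)) (nextK 2 ν 1 q.2 (Iic z)) ∂(γ.map (pairProj 2 1))
      ≤ ∫⁻ q, absDiff (stepK 2 γ 1 q {v | v.1 ≤ z}) (stepK 2 γ 1 q {v | v.2 ≤ z})
          ∂(γ.map (pairProj 2 1)) := by
  have hS : MeasurableSet {v : ℝ × ℝ | v.2 ≤ z} := measurableSet_le measurable_snd measurable_const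
  have ha : Measurable fun h => nextK 2 μ 1 h (Iic z) :=
    (nextK 2 μ 1).measurable_coe measurableSet_Iic
  have hb : Measurable fun h => nextK 2 ν 1 h (Iic z) :=
    (nextK 2 ν 1).measurable_coe measurableSet_Iic
  have ht : Measurable fun q => stepK 2 γ 1 q {v | v.2 ≤ z} := (stepK 2 γ 1).measurable_coe hS
  have hfst : ∫⁻ q, absDiff (stepK 2 γ 1 q {v | v.1 ≤ z}) (stepK 2 γ 1 q {v | v.2 ≤ z})
        ∂(γ.map (pairProj 2 1))
      = ∫⁻ q, absDiff (nextK 2 μ 1 q.1 (Iic z)) (stepK 2 γ 1 q {v | v.2 ≤ z})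
        ∂(γ.map (pairProj 2 1)) :=
    lintegral_congr_ae <| (hγ.stepK_fst_ae_eq z).mono fun q
      (hq : stepK 2 γ 1 q {v | v.1 ≤ z} = nextK 2 μ 1 q.1 (Iic z)) => by simp only [hq]
  rw [hfst, lintegral_eq_lintegral_condKernel_swap (F := fun q =>
      absDiff (nextK 2 μ 1 q.1 (Iic z)) (nextK 2 ν 1 q.2 (Iic z)))
      (measurable_absDiff (ha.comp measurable_fst) (hb.comp measurable_snd)),
    lintegral_eq_lintegral_condKernel_swap (F := fun q =>
      absDiff (nextK 2 μ 1 q.1 (Iic z)) (stepK 2 γ 1 q {v | v.2 ≤ z}))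
      (measurable_absDiff (ha.comp measurable_fst) ht), hγ.1.snd_map_pairProj 1]
  refine lintegral_mono_ae ?_
  filter_upwards [hγ.1.lintegral_stepK_snd_ae_eq z] with y hy
  refine lintegral_absDiff_le_of_lintegral_eq ha (ht.comp (measurable_id.prodMk measurable_const))
    (lintegral_kernel_ne_top _ (nextK 2 μ 1) _) ?_ hy
  rw [← vecCons_apply_zero_eq y]
  refine (hcdf z (y 0)).imp (fun h x => ?_) (fun h x => ?_) <;>
    simpa only [vecCons_apply_zero_eq] using h (x 0)

lemma IsCausal.lintegral_absDiff_nextK_le_lintegral_abs [IsProbabilityMeasure μ]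
    [IsProbabilityMeasure ν] (hγ : IsCausal 2 μ ν γ) (hcdf : CdfComparable μ ν) :
    ∫⁻ q, ∫⁻ z, absDiff (nextK 2 μ 1 q.1 (Iic z)) (nextK 2 ν 1 q.2 (Iic z)) ∂volume
        ∂(γ.map (pairProj 2 1))
      ≤ ∫⁻ p, ENNReal.ofReal |p.1 1 - p.2 1| ∂γ := by
  have : IsProbabilityMeasure γ := hγ.1.isProbabilityMeasure
  set Θ := stepK 2 γ 1
  have hX : Measurable fun p : ((Fin 1 → ℝ) × (Fin 1 → ℝ)) × ℝ => nextK 2 μ 1 p.1.1 (Iic p.2) :=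
    measurable_kernel_setOf_le ((nextK 2 μ 1).comap Prod.fst measurable_fst) measurable_id
  have hY : Measurable fun p : ((Fin 1 → ℝ) × (Fin 1 → ℝ)) × ℝ => nextK 2 ν 1 p.1.2 (Iic p.2) :=
    measurable_kernel_setOf_le ((nextK 2 ν 1).comap Prod.snd measurable_snd) measurable_id
  have hS := measurable_kernel_setOf_le Θ measurable_fst
  have hT := measurable_kernel_setOf_le Θ measurable_snd
  have habs : Measurable fun w : ((Fin 1 → ℝ) × (Fin 1 → ℝ)) × (ℝ × ℝ) =>
      ENNReal.ofReal |w.2.1 - w.2.2| := by fun_prop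
  calc ∫⁻ q, ∫⁻ z, absDiff (nextK 2 μ 1 q.1 (Iic z)) (nextK 2 ν 1 q.2 (Iic z)) ∂volume
        ∂(γ.map (pairProj 2 1))
      = ∫⁻ z, ∫⁻ q, absDiff (nextK 2 μ 1 q.1 (Iic z)) (nextK 2 ν 1 q.2 (Iic z))
          ∂(γ.map (pairProj 2 1)) :=
        lintegral_lintegral_swap (measurable_absDiff hX hY).aemeasurable
    _ ≤ ∫⁻ z, ∫⁻ q, absDiff (Θ q {v | v.1 ≤ z}) (Θ q {v | v.2 ≤ z}) ∂(γ.map (pairProj 2 1)) :=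
        lintegral_mono fun z => hγ.lintegral_absDiff_nextK_le hcdf z
    _ = ∫⁻ q, ∫⁻ z, absDiff (Θ q {v | v.1 ≤ z}) (Θ q {v | v.2 ≤ z}) ∂volume
          ∂(γ.map (pairProj 2 1)) :=
        (lintegral_lintegral_swap (measurable_absDiff hS hT).aemeasurable).symm
    _ ≤ ∫⁻ q, ∫⁻ v, ENNReal.ofReal |v.1 - v.2| ∂(Θ q) ∂(γ.map (pairProj 2 1)) :=
        lintegral_mono fun q => lintegral_absDiff_measure_le (Θ q) measurable_fst measurable_snd
    _ = ∫⁻ p, ENNReal.ofReal |p.1 1 - p.2 1| ∂γ := by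
        rw [← Measure.lintegral_compProd habs, compProd_stepK, lintegral_map habs]
        · simp
        · fun_prop

end CausalLowerBound

lemma lintegral_comp_pairProj (γ : Measure (Path 2 × Path 2)) {c : ℝ → ℝ → ℝ≥0∞}
    (hc : Measurable fun q : ℝ × ℝ => c q.1 q.2) :
    ∫⁻ p, c (p.1 0) (p.2 0) ∂γ = ∫⁻ q, c (q.1 0) (q.2 0) ∂(γ.map (pairProj 2 1)) := by
  have hc' : Measurable fun q : (Fin 1 → ℝ) × (Fin 1 → ℝ) => c (q.1 0) (q.2 0) :=
    hc.comp (f := fun q : (Fin 1 → ℝ) × (Fin 1 → ℝ) => (q.1 0, q.2 0)) (by fun_prop)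
  rw [lintegral_map hc' (measurable_pairProj 2 1)]
  simp [pairProj]

lemma IsCausal.exists_isBicausal_lintegral_le {μ ν : Measure (Path 2)} [IsProbabilityMeasure μ]
    [IsProbabilityMeasure ν] {γ : Measure (Path 2 × Path 2)} (hγ : IsCausal 2 μ ν γ)
    {c1 : ℝ → ℝ → ℝ≥0∞} (hc1 : Measurable fun q : ℝ × ℝ => c1 q.1 q.2)
    (hcdf : CdfComparable μ ν) :
    ∃ γ', IsBicausal 2 μ ν γ' ∧
      ∫⁻ p, c1 (p.1 0) (p.2 0) + ENNReal.ofReal |p.1 1 - p.2 1| ∂γ'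
        ≤ ∫⁻ p, c1 (p.1 0) (p.2 0) + ENNReal.ofReal |p.1 1 - p.2 1| ∂γ := by
  have : IsProbabilityMeasure γ := hγ.1.isProbabilityMeasure
  have : IsProbabilityMeasure (γ.map (pairProj 2 1)) :=
    Measure.isProbabilityMeasure_map (measurable_pairProj 2 1).aemeasurable
  have hfirst : Measurable fun p : Path 2 × Path 2 => c1 (p.1 0) (p.2 0) :=
    hc1.comp (f := fun p : Path 2 × Path 2 => (p.1 0, p.2 0)) (by fun_prop)
  refine ⟨quantileCoupling (γ.map (pairProj 2 1)) μ ν,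
    isBicausal_quantileCoupling (hγ.1.fst_map_pairProj 1) (hγ.1.snd_map_pairProj 1), ?_⟩
  rw [lintegral_add_left hfirst, lintegral_add_left hfirst, lintegral_comp_pairProj _ hc1,
    lintegral_comp_pairProj γ hc1, quantileCoupling_map_pairProj, lintegral_abs_quantileCoupling]
  exact add_le_add_right (hγ.lintegral_absDiff_nextK_le_lintegral_abs hcdf) _

theorem causal_equals_bicausal_two_steps
    (μ ν : Measure (Path 2)) [IsProbabilityMeasure μ] [IsProbabilityMeasure ν]
    (c1 : ℝ → ℝ → ℝ≥0∞)
    (hc1 : LowerSemicontinuous (fun q : ℝ × ℝ => c1 q.1 q.2))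
    (hcdf : ∀ z y1 : ℝ,
      (∀ x1 : ℝ, nextK 2 ν 1 ![y1] (Iic z) ≤ nextK 2 μ 1 ![x1] (Iic z)) ∨
      (∀ x1 : ℝ, nextK 2 μ 1 ![x1] (Iic z) ≤ nextK 2 ν 1 ![y1] (Iic z))) :
    (⨅ (γ : Measure (Path 2 × Path 2)) (_ : IsCausal 2 μ ν γ),
        ∫⁻ p, c1 (p.1 0) (p.2 0) + ENNReal.ofReal |p.1 1 - p.2 1| ∂γ)
      = ⨅ (γ : Measure (Path 2 × Path 2)) (_ : IsBicausal 2 μ ν γ),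
          ∫⁻ p, c1 (p.1 0) (p.2 0) + ENNReal.ofReal |p.1 1 - p.2 1| ∂γ := by
  refine le_antisymm (le_iInf₂ fun γ hγ => iInf₂_le γ hγ.1) (le_iInf₂ fun γ hγ => ?_)
  obtain ⟨γ', hγ', hle⟩ := hγ.exists_isBicausal_lintegral_le hc1.measurable hcdf
  exact (iInf₂_le γ' hγ').trans hle

end CausalTransport
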